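/- For every α_0 with 0 < α_0 ≤ 1/4 and every positive integer T, there exist probability distributions P_0, P_1, …, P_{2T} on ℝ × {−1,1} such that: (i) P_{i+1} is a 0.6-shift of P_i for every 0 ≤ i < 2T; (ii) P_i(Y = 1) = P_i(Y = −1) = 1/2 for all i; (iii) every P_i is supported on points x with −10 ≤ x ≤ 2; (iv) there exists θ* ∈ Θ_1 with L_r(θ*, P_i) = 0 for all i; (v) there exist θ_0 ∈ Θ_1 with L_r(θ_0, P_0) ≤ α_0 and a sequence θ_1, …, θ_{2T} such that for each 1 ≤ t ≤ 2T, θ_t ∈ Θ_1 minimizes over Θ_1 the pseudolabeled ramp loss on the X-marginal of P_t with pseudolabels generated by θ_{t−1}, and L_r(θ_{2T}, P_{2T}) ≥ min(1/2, 2^{T−1}·α_0). -/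

import Mathlib

open MeasureTheory

noncomputable section

/-- The ramp loss: `r(m) = 1` for `m ≤ 0`, `1 - m` for `0 ≤ m ≤ 1`, `0` for `m ≥ 1`. -/
def ramp (m : ℝ) : ℝ := max 0 (min 1 (1 - m))

/-- `sign(t) = 1` if `t ≥ 0`, `-1` otherwise. -/
def sgn (t : ℝ) : ℝ := if 0 ≤ t then 1 else -1

/-- The linear model on `ℝ` (`d = 1`): `M_θ(x) = w·x + b` for `θ = (w, b)`. -/
def model1 (θ : ℝ × ℝ) (x : ℝ) : ℝ := θ.1 * x + θ.2

/-- Ramp loss of a 1-D linear model on a distribution over `ℝ × {-1,1}`. -/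
def lossR1 (θ : ℝ × ℝ) (P : Measure (ℝ × ℝ)) : ℝ :=
  ∫ p, ramp (p.2 * model1 θ p.1) ∂P

/-- Pseudolabeled ramp loss of `θ'` on the `X`-marginal of `Q`, with pseudolabels from `θ`. -/
def pseudoLossR1 (θ θ' : ℝ × ℝ) (Q : Measure (ℝ × ℝ)) : ℝ :=
  ∫ x, ramp (sgn (model1 θ x) * model1 θ' x) ∂(Q.map Prod.fst)

/-- `Q` is a `ρ`-shift of `P` (in 1-D). -/
def IsShift1 (P Q : Measure (ℝ × ℝ)) (ρ : ℝ) : Prop :=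
  ∃ fneg fpos : ℝ → ℝ, Measurable fneg ∧ Measurable fpos ∧
    (∀ x, |fneg x - x| ≤ ρ) ∧ (∀ x, |fpos x - x| ≤ ρ) ∧
    Q = P.map (fun p => (if p.2 = 1 then fpos p.1 else fneg p.1, p.2))

open Finset

/-! ### Basic facts about `ramp`, `sgn` -/

lemma ramp_nonneg (m : ℝ) : 0 ≤ ramp m := le_max_left _ _

lemma ramp_eq_zero {m : ℝ} (h : 1 ≤ m) : ramp m = 0 := by
  unfold ramp
  rw [max_eq_left]
  exact min_le_of_right_le (by linarith)

lemma ramp_eq_one {m : ℝ} (h : m ≤ 0) : ramp m = 1 := by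
  unfold ramp
  rw [min_eq_left (by linarith), max_eq_right (by norm_num)]

lemma ramp_pair (a b : ℝ) : min 1 (2 - (a + b)) ≤ ramp a + ramp b := by
  rcases le_total a 0 with ha | ha
  · rw [ramp_eq_one ha]
    have h1 : min 1 (2 - (a+b)) ≤ 1 := min_le_left _ _
    linarith [ramp_nonneg b]
  · rcases le_total b 0 with hb | hb
    · rw [ramp_eq_one hb]
      have h1 : min 1 (2 - (a+b)) ≤ 1 := min_le_left _ _
      linarith [ramp_nonneg a]
    · have h1 : 1 - a ≤ ramp a := by
        unfold ramp
        rcases le_total 1 (1-a) with h | h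
        · calc 1 - a ≤ 1 := by linarith
               _ = min 1 (1-a) := (min_eq_left h).symm
               _ ≤ _ := le_max_right _ _
        · calc 1 - a = min 1 (1-a) := (min_eq_right h).symm
               _ ≤ _ := le_max_right _ _
      have h2 : 1 - b ≤ ramp b := by
        unfold ramp
        rcases le_total 1 (1-b) with h | h
        · calc 1 - b ≤ 1 := by linarith
               _ = min 1 (1-b) := (min_eq_left h).symm
               _ ≤ _ := le_max_right _ _
        · calc 1 - b = min 1 (1-b) := (min_eq_right h).symm
               _ ≤ _ := le_max_right _ _
      have h3 : min 1 (2 - (a+b)) ≤ 2 - (a+b) := min_le_right _ _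
      linarith

lemma sgn_nonneg {x : ℝ} (h : 0 ≤ x) : sgn x = 1 := if_pos h
lemma sgn_neg' {x : ℝ} (h : x < 0) : sgn x = -1 := if_neg (not_le.mpr h)

lemma ramp_cont : Continuous ramp := by unfold ramp; fun_prop

lemma sgn_meas : Measurable sgn := by
  unfold sgn
  exact Measurable.ite (measurableSet_le measurable_const measurable_id)
    measurable_const measurable_const

/-! ### Integrals against weighted sums of Dirac measures -/

section diracs
variable {α : Type*} [MeasurableSpace α] [MeasurableSingletonClass α]

lemma integrable_smul_dirac (f : α → ℝ) (c : ℝ) (x : α) :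
    Integrable f (ENNReal.ofReal c • Measure.dirac x) := by
  have hfin : IsFiniteMeasure (ENNReal.ofReal c • Measure.dirac x) := by
    constructor
    simp [Measure.smul_apply]
  have hae : f =ᵐ[ENNReal.ofReal c • Measure.dirac x] (fun _ => f x) := by
    have h0 : f =ᵐ[Measure.dirac x] (fun _ => f x) := ae_eq_dirac f
    exact h0.filter_mono (Measure.ae_smul_measure_le _)
  exact (integrable_const (f x)).congr hae.symm

lemma integral_smul_dirac (f : α → ℝ) {c : ℝ} (hc : 0 ≤ c) (x : α) :
    ∫ y, f y ∂(ENNReal.ofReal c • Measure.dirac x) = c * f x := by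
  rw [integral_smul_measure, integral_dirac, ENNReal.toReal_ofReal hc, smul_eq_mul]

end diracs

lemma map_finset_sum' {α β : Type*} [MeasurableSpace α] [MeasurableSpace β]
    {ι : Type*} (s : Finset ι) (μ : ι → Measure α) {f : α → β} (hf : Measurable f) :
    (∑ i ∈ s, μ i).map f = ∑ i ∈ s, (μ i).map f := by
  classical
  induction s using Finset.induction_on with
  | empty => simp
  | insert a s hx ih =>
    rw [Finset.sum_insert hx, Finset.sum_insert hx, Measure.map_add _ _ hf, ih]

/-! ### The construction -/

def eps (T : ℕ) : ℝ := 1 / (10 * T)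

def am (α₀ : ℝ) (T : ℕ) : ℝ := min α₀ (1 / 2 ^ T)

def cpos (T t j : ℕ) : ℝ :=
  if t + 2 ≤ 2 * j then 2 - j * eps T
  else if t + 2 = 2 * j + 1 then 7/5
  else if t = 2 * j then 4/5
  else if t = 2 * j + 1 then 1/5
  else if t = 2 * j + 2 then -2/5
  else -1

def PP (α₀ : ℝ) (T : ℕ) (t : ℕ) : Measure (ℝ × ℝ) :=
  ENNReal.ofReal (1/2) • Measure.dirac (-10, -1)
  + ENNReal.ofReal (am α₀ T) • Measure.dirac (-1, 1)
  + (∑ j ∈ Icc 1 (T - 1), ENNReal.ofReal (2^(j-1) * am α₀ T) • Measure.dirac (cpos T t j, 1))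
  + ENNReal.ofReal (1/2 - 2^(T-1) * am α₀ T) • Measure.dirac (2, 1)

def fpos (T t : ℕ) (x : ℝ) : ℝ :=
  if x = 2 - (↑(t/2 + 1)) * eps T then 7/5
  else if x = 7/5 then 4/5
  else if x = 4/5 then 1/5
  else if x = 1/5 then -2/5
  else if x = -2/5 then -1
  else x

/-! ### Small numeric facts -/

lemma eps_nonneg {T : ℕ} : 0 ≤ eps T := by unfold eps; positivity

lemma eps_pos {T : ℕ} (hT : 1 ≤ T) : 0 < eps T := by
  unfold eps
  have : (0:ℝ) < T := by exact_mod_cast hT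
  positivity

lemma mul_eps_le {T : ℕ} (hT : 1 ≤ T) {j : ℕ} (hj : j ≤ T) : (j : ℝ) * eps T ≤ 1/10 := by
  unfold eps
  have hT' : (0:ℝ) < T := by exact_mod_cast hT
  have hj' : (j:ℝ) ≤ T := by exact_mod_cast hj
  rw [div_eq_mul_inv, one_mul]
  rw [show (10 * (T:ℝ))⁻¹ = (T:ℝ)⁻¹ * (10:ℝ)⁻¹ by rw [mul_inv]; ring]
  calc (j:ℝ) * ((T:ℝ)⁻¹ * (10:ℝ)⁻¹) ≤ (T:ℝ) * ((T:ℝ)⁻¹ * (10:ℝ)⁻¹) := by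
        apply mul_le_mul_of_nonneg_right hj'; positivity
    _ = 1/10 := by field_simp

lemma am_pos (T : ℕ) {α₀ : ℝ} (hα : 0 < α₀) : 0 < am α₀ T := lt_min hα (by positivity)

lemma am_le {α₀ : ℝ} {T : ℕ} : am α₀ T ≤ α₀ := min_le_left _ _

lemma am_le_pow {α₀ : ℝ} {T : ℕ} : am α₀ T ≤ 1 / 2 ^ T := min_le_right _ _

lemma geom_sum_Icc (c : ℝ) (n : ℕ) : ∑ j ∈ Icc 1 n, 2^(j-1) * c = (2^n - 1) * c := by
  induction n with
  | zero => simp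
  | succ n ih =>
    rw [Finset.sum_Icc_succ_top (by omega), ih, show n + 1 - 1 = n by omega]
    ring

lemma pool_nonneg (T : ℕ) {α₀ : ℝ} (hα : 0 < α₀) (hT : 1 ≤ T) :
    0 ≤ 1/2 - 2^(T-1) * am α₀ T := by
  have h := am_le_pow (α₀ := α₀) (T := T)
  have h2 : (2:ℝ)^(T-1) * (1 / 2^T) = 1/2 := by
    rw [show T = (T-1) + 1 by omega, pow_succ]
    field_simp
    simp
  nlinarith [am_pos T hα, pow_pos (show (0:ℝ) < 2 by norm_num) (T-1)]

section main
variable {α₀ : ℝ} {T : ℕ}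

lemma cpos_range (hT : 1 ≤ T) (t : ℕ) {j : ℕ} (hj : j ≤ T) :
    -1 ≤ cpos T t j ∧ cpos T t j ≤ 2 := by
  have h1 := mul_eps_le hT hj
  have h2 : 0 ≤ (j:ℝ) * eps T := mul_nonneg (by positivity) eps_nonneg
  unfold cpos
  split_ifs <;> constructor <;> linarith

lemma PP_integral (hα : 0 < α₀) (hT : 1 ≤ T) (t : ℕ) (f : ℝ × ℝ → ℝ) :
    ∫ p, f p ∂(PP α₀ T t) =
      1/2 * f (-10, -1) + am α₀ T * f (-1, 1)
      + (∑ j ∈ Icc 1 (T-1), 2^(j-1) * am α₀ T * f (cpos T t j, 1))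
      + (1/2 - 2^(T-1) * am α₀ T) * f (2, 1) := by
  have ham := (am_pos T hα).le
  have hpool := pool_nonneg T hα hT
  unfold PP
  have h1 : Integrable f (ENNReal.ofReal (1/2) • Measure.dirac ((-10 : ℝ), (-1 : ℝ))) :=
    integrable_smul_dirac f _ _
  have h2 : Integrable f (ENNReal.ofReal (am α₀ T) • Measure.dirac ((-1 : ℝ), (1 : ℝ))) :=
    integrable_smul_dirac f _ _
  have h3 : Integrable f (∑ j ∈ Icc 1 (T - 1),
      ENNReal.ofReal (2^(j-1) * am α₀ T) • Measure.dirac (cpos T t j, 1)) :=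
    integrable_finset_sum_measure.2 (fun j _ => integrable_smul_dirac f _ _)
  have h4 : Integrable f
      (ENNReal.ofReal (1/2 - 2^(T-1) * am α₀ T) • Measure.dirac ((2 : ℝ), (1 : ℝ))) :=
    integrable_smul_dirac f _ _
  rw [integral_add_measure ((h1.add_measure h2).add_measure h3) h4,
    integral_add_measure (h1.add_measure h2) h3,
    integral_add_measure h1 h2,
    integral_finset_sum_measure (fun j _ => integrable_smul_dirac f _ _),
    integral_smul_dirac f (by norm_num : (0:ℝ) ≤ 1/2),
    integral_smul_dirac f ham, integral_smul_dirac f hpool]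
  have he : ∀ j ∈ Icc 1 (T-1),
      ∫ y, f y ∂(ENNReal.ofReal (2^(j-1) * am α₀ T) • Measure.dirac (cpos T t j, 1))
      = 2^(j-1) * am α₀ T * f (cpos T t j, 1) := by
    intro j _
    exact integral_smul_dirac f (by positivity) _
  rw [Finset.sum_congr rfl he]

lemma PP_apply (t : ℕ) {S : Set (ℝ × ℝ)} (hS : MeasurableSet S) :
    PP α₀ T t S = ENNReal.ofReal (1/2) * S.indicator 1 (-10, -1)
      + ENNReal.ofReal (am α₀ T) * S.indicator 1 (-1, 1)
      + (∑ j ∈ Icc 1 (T-1), ENNReal.ofReal (2^(j-1) * am α₀ T) * S.indicator 1 (cpos T t j, 1))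
      + ENNReal.ofReal (1/2 - 2^(T-1) * am α₀ T) * S.indicator 1 (2, 1) := by
  unfold PP
  rw [Measure.add_apply, Measure.add_apply, Measure.add_apply,
    Measure.finset_sum_apply]
  simp only [Measure.smul_apply, smul_eq_mul, Measure.dirac_apply' _ hS]

lemma PP_prob (hα : 0 < α₀) (hT : 1 ≤ T) (t : ℕ) : IsProbabilityMeasure (PP α₀ T t) := by
  constructor
  rw [PP_apply t MeasurableSet.univ]
  simp only [Set.indicator_univ, Pi.one_apply, mul_one]
  have ham := (am_pos T hα).le
  have hpool := pool_nonneg T hα hT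
  have hsum : 0 ≤ ∑ j ∈ Icc 1 (T-1), 2^(j-1) * am α₀ T :=
    Finset.sum_nonneg (fun j _ => by positivity)
  rw [← ENNReal.ofReal_sum_of_nonneg (fun j _ => by positivity),
    ← ENNReal.ofReal_add (by norm_num) ham,
    ← ENNReal.ofReal_add (by positivity) hsum,
    ← ENNReal.ofReal_add (by positivity) hpool]
  rw [geom_sum_Icc]
  have h1 : 1/2 + am α₀ T + (2 ^ (T - 1) - 1) * am α₀ T + (1 / 2 - 2 ^ (T - 1) * am α₀ T) = 1 := by
    ring
  rw [h1, ENNReal.ofReal_one]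

lemma PP_mass_pos (hα : 0 < α₀) (hT : 1 ≤ T) (t : ℕ) :
    PP α₀ T t {p | p.2 = 1} = 1/2 := by
  have hS : MeasurableSet {p : ℝ × ℝ | p.2 = 1} := measurable_snd (measurableSet_singleton 1)
  rw [PP_apply t hS]
  have ham := (am_pos T hα).le
  have hpool := pool_nonneg T hα hT
  simp only [Set.indicator_apply, Set.mem_setOf_eq]
  norm_num
  have hsum : 0 ≤ ∑ j ∈ Icc 1 (T-1), 2^(j-1) * am α₀ T :=
    Finset.sum_nonneg (fun j _ => by positivity)
  have hs2 : ∑ x ∈ Icc 1 (T-1), (2:ENNReal)^(x-1) * ENNReal.ofReal (am α₀ T)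
      = ENNReal.ofReal (∑ j ∈ Icc 1 (T-1), 2^(j-1) * am α₀ T) := by
    rw [ENNReal.ofReal_sum_of_nonneg (fun j _ => by positivity)]
    refine Finset.sum_congr rfl (fun j _ => ?_)
    rw [ENNReal.ofReal_mul (by positivity), ENNReal.ofReal_pow (by norm_num), ENNReal.ofReal_ofNat]
  rw [hs2,
    ← ENNReal.ofReal_add ham hsum,
    ← ENNReal.ofReal_add (add_nonneg ham hsum) hpool, geom_sum_Icc]
  have h1 : am α₀ T + (2 ^ (T - 1) - 1) * am α₀ T + (1 / 2 - 2 ^ (T - 1) * am α₀ T) = 1/2 := by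
    ring
  rw [h1, ENNReal.ofReal_div_of_pos (by norm_num)]
  norm_num

lemma PP_mass_neg (t : ℕ) :
    PP α₀ T t {p | p.2 = -1} = 1/2 := by
  have hS : MeasurableSet {p : ℝ × ℝ | p.2 = -1} :=
    measurable_snd (measurableSet_singleton (-1))
  rw [PP_apply t hS]
  simp only [Set.indicator_apply, Set.mem_setOf_eq]
  norm_num
  rw [ENNReal.ofReal_div_of_pos (by norm_num)]
  norm_num

lemma PP_support (hT : 1 ≤ T) (t : ℕ) :
    PP α₀ T t {p | ¬(-10 ≤ p.1 ∧ p.1 ≤ 2)} = 0 := by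
  have h1 : MeasurableSet {p : ℝ × ℝ | -10 ≤ p.1 ∧ p.1 ≤ 2} := by
    rw [Set.setOf_and]
    exact (measurableSet_le measurable_const measurable_fst).inter
      (measurableSet_le measurable_fst measurable_const)
  have hS : MeasurableSet {p : ℝ × ℝ | ¬(-10 ≤ p.1 ∧ p.1 ≤ 2)} := by
    rw [show {p : ℝ × ℝ | ¬(-10 ≤ p.1 ∧ p.1 ≤ 2)} = {p : ℝ × ℝ | -10 ≤ p.1 ∧ p.1 ≤ 2}ᶜ by
      ext p; simp]
    exact h1.compl
  rw [PP_apply t hS]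
  have hmem : ∀ x : ℝ, -10 ≤ x → x ≤ 2 → ∀ y : ℝ,
      ((x, y) ∉ {p : ℝ × ℝ | ¬(-10 ≤ p.1 ∧ p.1 ≤ 2)}) := by
    intro x hx1 hx2 y
    simp only [Set.mem_setOf_eq, not_not]
    exact ⟨hx1, hx2⟩
  rw [Set.indicator_of_notMem (hmem _ (by norm_num) (by norm_num) _),
    Set.indicator_of_notMem (hmem _ (by norm_num) (by norm_num) _),
    Set.indicator_of_notMem (hmem _ (by norm_num) (by norm_num) _),
    Finset.sum_eq_zero]
  · simp
  · intro j hj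
    simp only [Finset.mem_Icc] at hj
    have hr := cpos_range hT t (show j ≤ T by omega)
    rw [Set.indicator_of_notMem (hmem _ (by linarith [hr.1]) hr.2 _), mul_zero]
lemma fpos_meas (T t : ℕ) : Measurable (fpos T t) := by
  unfold fpos
  refine Measurable.ite (measurableSet_eq) measurable_const ?_
  refine Measurable.ite (measurableSet_eq) measurable_const ?_
  refine Measurable.ite (measurableSet_eq) measurable_const ?_
  refine Measurable.ite (measurableSet_eq) measurable_const ?_
  exact Measurable.ite (measurableSet_eq) measurable_const measurable_id

lemma fpos_bound {T t : ℕ} (hT : 1 ≤ T) (ht : t < 2*T) (x : ℝ) : |fpos T t x - x| ≤ 3/5 := by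
  have h1 : (↑(t/2 + 1) : ℝ) * eps T ≤ 1/10 := mul_eps_le hT (by omega)
  have h2 : 0 ≤ (↑(t/2 + 1) : ℝ) * eps T := mul_nonneg (by positivity) eps_nonneg
  push_cast at h1 h2
  unfold fpos
  split_ifs with c1 c2 c3 c4 c5 <;> rw [abs_le] <;> subst_eqs <;> constructor <;> norm_num <;> linarith

lemma trig_lb {T t : ℕ} (hT : 1 ≤ T) (ht : t < 2*T) : (19:ℝ)/10 ≤ 2 - (↑(t/2 + 1)) * eps T := by
  have h1 : (↑(t/2 + 1) : ℝ) * eps T ≤ 1/10 := mul_eps_le hT (by omega)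
  linarith

lemma trig_ne_lt {T t : ℕ} (hT : 1 ≤ T) (ht : t < 2*T) {x : ℝ} (hx : x ≤ 7/5) :
    x ≠ 2 - (↑(t/2 + 1)) * eps T := by
  have := trig_lb hT ht
  intro h; rw [h] at hx; linarith

lemma trig_ne_two {T t : ℕ} (hT : 1 ≤ T) (ht : t < 2*T) : (2:ℝ) ≠ 2 - (↑(t/2 + 1)) * eps T := by
  have h1 : 0 < (↑(t/2 + 1) : ℝ) * eps T := by
    apply mul_pos _ (eps_pos hT)
    have : (1:ℕ) ≤ t/2 + 1 := by omega
    exact_mod_cast Nat.cast_pos.mpr this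
  intro h; nlinarith

lemma fpos_75 {T t : ℕ} (hT : 1 ≤ T) (ht : t < 2*T) : fpos T t (7/5) = 4/5 := by
  unfold fpos
  rw [if_neg (trig_ne_lt hT ht (by norm_num)), if_pos rfl]
lemma fpos_45 {T t : ℕ} (hT : 1 ≤ T) (ht : t < 2*T) : fpos T t (4/5) = 1/5 := by
  unfold fpos
  rw [if_neg (trig_ne_lt hT ht (by norm_num)), if_neg (by norm_num), if_pos rfl]
lemma fpos_15 {T t : ℕ} (hT : 1 ≤ T) (ht : t < 2*T) : fpos T t (1/5) = -2/5 := by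
  unfold fpos
  rw [if_neg (trig_ne_lt hT ht (by norm_num)), if_neg (by norm_num), if_neg (by norm_num), if_pos rfl]
lemma fpos_m25 {T t : ℕ} (hT : 1 ≤ T) (ht : t < 2*T) : fpos T t (-2/5) = -1 := by
  unfold fpos
  rw [if_neg (trig_ne_lt hT ht (by norm_num)), if_neg (by norm_num), if_neg (by norm_num),
    if_neg (by norm_num), if_pos rfl]
lemma fpos_m1 {T t : ℕ} (hT : 1 ≤ T) (ht : t < 2*T) : fpos T t (-1) = -1 := by
  unfold fpos
  rw [if_neg (trig_ne_lt hT ht (by norm_num)), if_neg (by norm_num), if_neg (by norm_num),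
    if_neg (by norm_num), if_neg (by norm_num)]
lemma fpos_two {T t : ℕ} (hT : 1 ≤ T) (ht : t < 2*T) : fpos T t 2 = 2 := by
  unfold fpos
  rw [if_neg (trig_ne_two hT ht), if_neg (by norm_num), if_neg (by norm_num),
    if_neg (by norm_num), if_neg (by norm_num)]

lemma fpos_wait {T t j : ℕ} (hT : 1 ≤ T) (hj : j ≤ T) (hne : j ≠ t/2 + 1) :
    fpos T t (2 - j * eps T) = 2 - j * eps T := by
  have hε := eps_pos hT
  have hjε : (j:ℝ) * eps T ≤ 1/10 := mul_eps_le hT hj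
  have hjε0 : 0 ≤ (j:ℝ) * eps T := mul_nonneg (by positivity) eps_nonneg
  unfold fpos
  rw [if_neg, if_neg (by linarith), if_neg (by linarith), if_neg (by linarith), if_neg (by linarith)]
  intro h
  have h' : (j:ℝ) * eps T = ((t/2 + 1 : ℕ):ℝ) * eps T := by linarith
  have : (j:ℝ) = ((t/2 + 1 : ℕ):ℝ) := mul_right_cancel₀ hε.ne' h'
  exact hne (by exact_mod_cast this)

lemma cpos_step {T t j : ℕ} (hT : 1 ≤ T) (ht : t < 2*T) (hj1 : 1 ≤ j) (hj2 : j ≤ T - 1) :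
    fpos T t (cpos T t j) = cpos T (t+1) j := by
  have hjT : j ≤ T := by omega
  by_cases c1 : t + 2 ≤ 2*j
  · by_cases c2 : t + 3 ≤ 2*j
    · have e1 : cpos T t j = 2 - j * eps T := by unfold cpos; rw [if_pos c1]
      have e2 : cpos T (t+1) j = 2 - j * eps T := by unfold cpos; rw [if_pos (by omega)]
      rw [e1, e2]
      exact fpos_wait hT hjT (by omega)
    · have hj' : j = t/2 + 1 := by omega
      have e1 : cpos T t j = 2 - j * eps T := by unfold cpos; rw [if_pos c1]
      have e2 : cpos T (t+1) j = 7/5 := by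
        unfold cpos; rw [if_neg (by omega), if_pos (by omega)]
      rw [e1, e2]
      unfold fpos
      rw [if_pos (by rw [hj'])]
  · by_cases c2 : t + 2 = 2*j + 1
    · have e1 : cpos T t j = 7/5 := by unfold cpos; rw [if_neg c1, if_pos c2]
      have e2 : cpos T (t+1) j = 4/5 := by
        unfold cpos; rw [if_neg (by omega), if_neg (by omega), if_pos (by omega)]
      rw [e1, e2]; exact fpos_75 hT ht
    · by_cases c3 : t = 2*j
      · have e1 : cpos T t j = 4/5 := by unfold cpos; rw [if_neg c1, if_neg c2, if_pos c3]
        have e2 : cpos T (t+1) j = 1/5 := by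
          unfold cpos
          rw [if_neg (by omega), if_neg (by omega), if_neg (by omega), if_pos (by omega)]
        rw [e1, e2]; exact fpos_45 hT ht
      · by_cases c4 : t = 2*j + 1
        · have e1 : cpos T t j = 1/5 := by
            unfold cpos; rw [if_neg c1, if_neg c2, if_neg c3, if_pos c4]
          have e2 : cpos T (t+1) j = -2/5 := by
            unfold cpos
            rw [if_neg (by omega), if_neg (by omega), if_neg (by omega), if_neg (by omega),
              if_pos (by omega)]
          rw [e1, e2]; exact fpos_15 hT ht
        · by_cases c5 : t = 2*j + 2
          · have e1 : cpos T t j = -2/5 := by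
              unfold cpos; rw [if_neg c1, if_neg c2, if_neg c3, if_neg c4, if_pos c5]
            have e2 : cpos T (t+1) j = -1 := by
              unfold cpos
              rw [if_neg (by omega), if_neg (by omega), if_neg (by omega), if_neg (by omega),
                if_neg (by omega)]
            rw [e1, e2]; exact fpos_m25 hT ht
          · have e1 : cpos T t j = -1 := by
              unfold cpos; rw [if_neg c1, if_neg c2, if_neg c3, if_neg c4, if_neg c5]
            have e2 : cpos T (t+1) j = -1 := by
              unfold cpos
              rw [if_neg (by omega), if_neg (by omega), if_neg (by omega), if_neg (by omega),
                if_neg (by omega)]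
            rw [e1, e2]; exact fpos_m1 hT ht

lemma PP_shift (hT : 1 ≤ T) {t : ℕ} (ht : t < 2*T) :
    IsShift1 (PP α₀ T t) (PP α₀ T (t+1)) 0.6 := by
  have hFm : Measurable (fun p : ℝ × ℝ => ((if p.2 = 1 then fpos T t p.1 else p.1), p.2)) := by
    apply Measurable.prodMk _ measurable_snd
    exact Measurable.ite (measurable_snd (measurableSet_singleton 1))
      ((fpos_meas T t).comp measurable_fst) measurable_fst
  refine ⟨id, fpos T t, measurable_id, fpos_meas T t, ?_, ?_, ?_⟩
  · intro x; simp; norm_num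
  · intro x
    have := fpos_bound hT ht x
    calc |fpos T t x - x| ≤ 3/5 := this
      _ ≤ 0.6 := by norm_num
  · unfold PP
    simp only [id_eq]
    rw [Measure.map_add _ _ hFm, Measure.map_add _ _ hFm, Measure.map_add _ _ hFm,
      map_finset_sum' _ _ hFm]
    simp only [Measure.map_smul, Measure.map_dirac' hFm]
    norm_num
    rw [fpos_m1 hT ht, fpos_two hT ht]
    congr 2
    apply Finset.sum_congr rfl
    intro j hj
    simp only [Finset.mem_Icc] at hj
    rw [cpos_step hT ht hj.1 hj.2]

lemma pseudo_integrand_meas (θ θ' : ℝ × ℝ) :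
    Measurable (fun x => ramp (sgn (model1 θ x) * model1 θ' x)) := by
  have h1 : Measurable (model1 θ) := by unfold model1; fun_prop
  have h2 : Measurable (model1 θ') := by unfold model1; fun_prop
  exact ramp_cont.measurable.comp ((sgn_meas.comp h1).mul h2)

lemma pseudoLoss_eq (θ θ' : ℝ × ℝ) (Q : Measure (ℝ × ℝ)) :
    pseudoLossR1 θ θ' Q = ∫ p, ramp (sgn (model1 θ p.1) * model1 θ' p.1) ∂Q := by
  unfold pseudoLossR1
  rw [integral_map measurable_fst.aemeasurable
    (pseudo_integrand_meas θ θ').aestronglyMeasurable]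

lemma pseudo_formula (hα : 0 < α₀) (hT : 1 ≤ T) (t : ℕ) (θ' : ℝ × ℝ) :
    pseudoLossR1 (1, 0) θ' (PP α₀ T t) =
      1/2 * ramp (-(model1 θ' (-10))) + am α₀ T * ramp (-(model1 θ' (-1)))
      + (∑ j ∈ Icc 1 (T-1),
          2^(j-1) * am α₀ T * ramp (sgn (cpos T t j) * model1 θ' (cpos T t j)))
      + (1/2 - 2^(T-1) * am α₀ T) * ramp (model1 θ' 2) := by
  rw [pseudoLoss_eq, PP_integral hα hT]
  have hm : ∀ x : ℝ, model1 (1, 0) x = x := by intro x; simp [model1]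
  simp only [hm]
  rw [sgn_neg' (by norm_num : (-10:ℝ) < 0), sgn_neg' (by norm_num : (-1:ℝ) < 0),
    sgn_nonneg (by norm_num : (0:ℝ) ≤ 2)]
  ring_nf

lemma sgn_mul_self (x : ℝ) : sgn x * x = |x| := by
  unfold sgn
  split_ifs with h
  · rw [abs_of_nonneg h]; ring
  · rw [abs_of_neg (not_le.mp h)]; ring

lemma our_g_zero {x : ℝ} (h : 1 ≤ |x|) : ramp (sgn x * x) = 0 := by
  rw [sgn_mul_self]; exact ramp_eq_zero h

lemma pseudo_nonneg (θ θ' : ℝ × ℝ) (Q : Measure (ℝ × ℝ)) : 0 ≤ pseudoLossR1 θ θ' Q :=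
  integral_nonneg (fun x => ramp_nonneg _)

/-! ### Loss evaluations -/

lemma loss_star (hα : 0 < α₀) (hT : 1 ≤ T) (t : ℕ) : lossR1 (1, 8) (PP α₀ T t) = 0 := by
  unfold lossR1
  rw [PP_integral hα hT]
  have h1 : ∀ j ∈ Icc 1 (T-1), 2^(j-1) * am α₀ T
      * ramp (((cpos T t j, (1:ℝ)).2) * model1 (1, 8) (cpos T t j, (1:ℝ)).1) = 0 := by
    intro j hj
    simp only [Finset.mem_Icc] at hj
    have hr := cpos_range hT t (show j ≤ T by omega)
    have : ramp ((1:ℝ) * model1 (1, 8) (cpos T t j)) = 0 := by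
      apply ramp_eq_zero
      simp only [model1]
      norm_num
      linarith [hr.1]
    simp only [this]
    simp
  rw [Finset.sum_congr rfl h1]
  simp only [model1]
  norm_num
  rw [ramp_eq_zero (by norm_num : (1:ℝ) ≤ 2), ramp_eq_zero (by norm_num : (1:ℝ) ≤ 7),
    ramp_eq_zero (by norm_num : (1:ℝ) ≤ 10)]
  ring

lemma loss_init (hα : 0 < α₀) (hT : 1 ≤ T) : lossR1 (1, 0) (PP α₀ T 0) = am α₀ T := by
  unfold lossR1
  rw [PP_integral hα hT]
  have h1 : ∀ j ∈ Icc 1 (T-1), 2^(j-1) * am α₀ T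
      * ramp (((cpos T 0 j, (1:ℝ)).2) * model1 (1, 0) (cpos T 0 j, (1:ℝ)).1) = 0 := by
    intro j hj
    simp only [Finset.mem_Icc] at hj
    have hc : cpos T 0 j = 2 - j * eps T := by
      unfold cpos; rw [if_pos (by omega)]
    have hjε : (j:ℝ) * eps T ≤ 1/10 := mul_eps_le hT (by omega)
    have : ramp ((1:ℝ) * model1 (1, 0) (cpos T 0 j)) = 0 := by
      apply ramp_eq_zero
      simp only [model1, hc]
      norm_num
      linarith
    simp only [this]
    simp
  rw [Finset.sum_congr rfl h1]
  simp only [model1]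
  norm_num
  rw [ramp_eq_zero (by norm_num : (1:ℝ) ≤ 10), ramp_eq_one (by norm_num : (-1:ℝ) ≤ 0),
    ramp_eq_zero (by norm_num : (1:ℝ) ≤ 2)]
  ring

lemma cpos_final {j : ℕ} (hj1 : 1 ≤ j) (hj2 : j ≤ T - 1) (hT : 1 ≤ T) :
    cpos T (2*T) j ≤ -2/5 := by
  unfold cpos
  split_ifs with h1 h2 h3 h4 h5 <;> first | (exfalso; omega) | norm_num

lemma loss_final (hα : 0 < α₀) (hT : 1 ≤ T) :
    lossR1 (1, -(3/5)) (PP α₀ T (2*T)) = 2^(T-1) * am α₀ T := by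
  unfold lossR1
  rw [PP_integral hα hT]
  have h1 : ∀ j ∈ Icc 1 (T-1), 2^(j-1) * am α₀ T
      * ramp (((cpos T (2*T) j, (1:ℝ)).2) * model1 (1, -(3/5)) (cpos T (2*T) j, (1:ℝ)).1)
      = 2^(j-1) * am α₀ T := by
    intro j hj
    simp only [Finset.mem_Icc] at hj
    have hc := cpos_final hj.1 hj.2 hT
    have : ramp ((1:ℝ) * model1 (1, -(3/5)) (cpos T (2*T) j)) = 1 := by
      apply ramp_eq_one
      simp only [model1]
      norm_num
      linarith
    simp only [this]
    simp
  rw [Finset.sum_congr rfl h1]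
  simp only [model1]
  norm_num
  rw [ramp_eq_zero (by norm_num : (1:ℝ) ≤ 53/5), ramp_eq_one (by norm_num : (-(8/5):ℝ) ≤ 0),
    ramp_eq_zero (by norm_num : (1:ℝ) ≤ 7/5)]
  rw [show ∑ x ∈ Icc 1 (T - 1), (2:ℝ)^(x-1) * am α₀ T = (2^(T-1) - 1) * am α₀ T from
    geom_sum_Icc _ _]
  ring

/-! ### Scalar floor lemmas -/

lemma floorO {w b p m : ℝ} (hw : w ≤ 1) (hp : 0 ≤ p) (hpm : p ≤ m) :
    (4/5)*p ≤ p * ramp (w*(1/5) + b) + m * ramp (w - b) := by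
  have h45 : (4/5 : ℝ) ≤ ramp (w*(1/5) + b) + ramp (w - b) :=
    le_trans (le_min (by norm_num) (by linarith)) (ramp_pair _ _)
  nlinarith [mul_le_mul_of_nonneg_left h45 hp,
    mul_le_mul_of_nonneg_right hpm (ramp_nonneg (w - b))]

lemma floorE {w b p q m : ℝ} (hw : w ≤ 1) (hq : 0 ≤ q) (hqp : q ≤ p) (hpqm : p - q ≤ m) :
    (1/5)*p + (3/5)*q ≤ p * ramp (w*(4/5) + b) + q * ramp (w*(2/5) - b) + m * ramp (w - b) := by
  have h45 : (4/5 : ℝ) ≤ ramp (w*(4/5) + b) + ramp (w*(2/5) - b) :=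
    le_trans (le_min (by norm_num) (by linarith)) (ramp_pair _ _)
  have h15 : (1/5 : ℝ) ≤ ramp (w*(4/5) + b) + ramp (w - b) :=
    le_trans (le_min (by norm_num) (by linarith)) (ramp_pair _ _)
  nlinarith [mul_le_mul_of_nonneg_left h45 hq,
    mul_le_mul_of_nonneg_left h15 (sub_nonneg.mpr hqp),
    mul_le_mul_of_nonneg_right hpqm (ramp_nonneg (w - b)),
    ramp_nonneg (w*(4/5) + b), ramp_nonneg (w*(2/5) - b), ramp_nonneg (w - b)]

/-! ### Trivial steps -/

lemma ramp_one : ramp 1 = 0 := ramp_eq_zero le_rfl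

lemma pseudo_t1 (hα : 0 < α₀) (hT : 1 ≤ T) :
    pseudoLossR1 (1, 0) (1, 0) (PP α₀ T 1) = 0 := by
  rw [pseudo_formula hα hT]
  have hm1 : ∀ x : ℝ, model1 (1, 0) x = x := fun x => by simp [model1]
  simp only [hm1]
  have h1 : ∀ j ∈ Icc 1 (T-1),
      2^(j-1) * am α₀ T * ramp (sgn (cpos T 1 j) * cpos T 1 j) = 0 := by
    intro j hj
    simp only [Finset.mem_Icc] at hj
    by_cases hj1 : j = 1
    · subst hj1
      have hc : cpos T 1 1 = 7/5 := by
        unfold cpos; rw [if_neg (by omega), if_pos (by omega)]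
      rw [hc, our_g_zero (by rw [abs_of_nonneg] <;> norm_num), mul_zero]
    · have hc : cpos T 1 j = 2 - j * eps T := by
        unfold cpos; rw [if_pos (by omega)]
      have hjε : (j:ℝ) * eps T ≤ 1/10 := mul_eps_le hT (by omega)
      have hjε0 : 0 ≤ (j:ℝ) * eps T := mul_nonneg (by positivity) eps_nonneg
      rw [hc, our_g_zero (by rw [abs_of_nonneg (by linarith)]; linarith), mul_zero]
  rw [Finset.sum_congr rfl h1]
  norm_num
  rw [ramp_eq_zero (by norm_num : (1:ℝ) ≤ 10), ramp_one,
    ramp_eq_zero (by norm_num : (1:ℝ) ≤ 2)]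
  ring

lemma pseudo_final (hα : 0 < α₀) (hT : 1 ≤ T) :
    pseudoLossR1 (1, 0) (1, -(3/5)) (PP α₀ T (2*T)) = 0 := by
  rw [pseudo_formula hα hT]
  have h1 : ∀ j ∈ Icc 1 (T-1),
      2^(j-1) * am α₀ T
        * ramp (sgn (cpos T (2*T) j) * model1 (1, -(3/5)) (cpos T (2*T) j)) = 0 := by
    intro j hj
    simp only [Finset.mem_Icc] at hj
    have hc := cpos_final hj.1 hj.2 hT
    have hr := (cpos_range hT (2*T) (show j ≤ T by omega)).1
    rw [sgn_neg' (by linarith : cpos T (2*T) j < 0)]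
    have : ramp (-1 * model1 (1, -(3/5)) (cpos T (2*T) j)) = 0 := by
      apply ramp_eq_zero
      simp only [model1]
      norm_num
      linarith
    rw [this, mul_zero]
  rw [Finset.sum_congr rfl h1]
  simp only [model1]
  norm_num
  rw [ramp_eq_zero (by norm_num : (1:ℝ) ≤ 53/5), ramp_eq_zero (by norm_num : (1:ℝ) ≤ 8/5),
    ramp_eq_zero (by norm_num : (1:ℝ) ≤ 7/5)]
  ring

/-! ### Main minimization steps -/

lemma step_odd (hα : 0 < α₀) (hT : 1 ≤ T) {k : ℕ} (hk1 : 1 ≤ k) (hk2 : k ≤ T-1)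
    (w b : ℝ) (hw : |w| ≤ 1) :
    pseudoLossR1 (1, 0) (1, 0) (PP α₀ T (2*k+1))
      ≤ pseudoLossR1 (1, 0) (w, b) (PP α₀ T (2*k+1)) := by
  have hw1 : w ≤ 1 := le_trans (le_abs_self w) hw
  have hA0 : 0 < am α₀ T := am_pos T hα
  rw [pseudo_formula hα hT, pseudo_formula hα hT]
  have hm1 : ∀ x : ℝ, model1 (1, 0) x = x := fun x => by simp [model1]
  have hm2 : ∀ x : ℝ, model1 (w, b) x = w * x + b := fun x => by simp [model1]
  simp only [hm1, hm2]
  -- positions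
  have hck : cpos T (2*k+1) k = 1/5 := by
    unfold cpos
    rw [if_neg (by omega), if_neg (by omega), if_neg (by omega), if_pos rfl]
  have hparked : ∀ j, 1 ≤ j → j + 1 ≤ k → cpos T (2*k+1) j = -1 := by
    intro j hj1 hj2
    unfold cpos
    rw [if_neg (by omega), if_neg (by omega), if_neg (by omega), if_neg (by omega),
      if_neg (by omega)]
  -- LHS chunk sum
  have hL : ∀ j ∈ Icc 1 (T-1),
      2^(j-1) * am α₀ T * ramp (sgn (cpos T (2*k+1) j) * cpos T (2*k+1) j)
      = if j = k then (4/5) * (2^(k-1) * am α₀ T) else 0 := by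
    intro j hj
    simp only [Finset.mem_Icc] at hj
    by_cases hjk : j = k
    · subst hjk
      rw [hck, if_pos rfl, sgn_nonneg (by norm_num : (0:ℝ) ≤ 1/5)]
      rw [show ramp (1 * (1/5)) = 4/5 by unfold ramp; norm_num]
      ring
    · rw [if_neg hjk]
      rcases lt_or_gt_of_ne hjk with hlt | hgt
      · rw [hparked j hj.1 (by omega), our_g_zero (by rw [abs_of_nonpos] <;> norm_num), mul_zero]
      · by_cases hj75 : j = k+1
        · subst hj75
          have hc : cpos T (2*k+1) (k+1) = 7/5 := by
            unfold cpos; rw [if_neg (by omega), if_pos (by omega)]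
          rw [hc, our_g_zero (by rw [abs_of_nonneg] <;> norm_num), mul_zero]
        · have hc : cpos T (2*k+1) j = 2 - j * eps T := by
            unfold cpos; rw [if_pos (by omega)]
          have hjε : (j:ℝ) * eps T ≤ 1/10 := mul_eps_le hT (by omega)
          have hjε0 : 0 ≤ (j:ℝ) * eps T := mul_nonneg (by positivity) eps_nonneg
          rw [hc, our_g_zero (by rw [abs_of_nonneg (by linarith)]; linarith), mul_zero]
  rw [Finset.sum_congr rfl hL, Finset.sum_ite_eq' (Icc 1 (T-1)) k,
    if_pos (by simp only [Finset.mem_Icc]; omega)]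
  -- RHS chunk sum lower bound
  set S := ∑ j ∈ Icc 1 (T-1),
    2^(j-1) * am α₀ T * ramp (sgn (cpos T (2*k+1) j) * (w * cpos T (2*k+1) j + b)) with hS
  have hsub : ∑ j ∈ Icc 1 k,
      2^(j-1) * am α₀ T * ramp (sgn (cpos T (2*k+1) j) * (w * cpos T (2*k+1) j + b)) ≤ S := by
    apply Finset.sum_le_sum_of_subset_of_nonneg (Finset.Icc_subset_Icc_right (by omega))
    intro j _ _
    exact mul_nonneg (by positivity) (ramp_nonneg _)
  have hsplit : ∑ j ∈ Icc 1 k,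
      2^(j-1) * am α₀ T * ramp (sgn (cpos T (2*k+1) j) * (w * cpos T (2*k+1) j + b))
      = (2^(k-1) - 1) * (am α₀ T * ramp (w - b))
        + 2^(k-1) * am α₀ T * ramp (w * (1/5) + b) := by
    rw [show k = (k-1) + 1 by omega, Finset.sum_Icc_succ_top (by omega)]
    rw [show (k-1) + 1 = k by omega, hck]
    rw [sgn_nonneg (by norm_num : (0:ℝ) ≤ 1/5), one_mul]
    have hpk : ∀ j ∈ Icc 1 (k-1),
        2^(j-1) * am α₀ T * ramp (sgn (cpos T (2*k+1) j) * (w * cpos T (2*k+1) j + b))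
        = 2^(j-1) * (am α₀ T * ramp (w - b)) := by
      intro j hj
      simp only [Finset.mem_Icc] at hj
      rw [hparked j hj.1 (by omega), sgn_neg' (by norm_num : (-1:ℝ) < 0)]
      rw [show -1 * (w * -1 + b) = w - b by ring]
      ring
    rw [Finset.sum_congr rfl hpk, geom_sum_Icc]
  -- assemble
  have hfloor : (4/5) * (2^(k-1) * am α₀ T)
      ≤ am α₀ T * ramp (-(w * -1 + b)) + ((2^(k-1) - 1) * (am α₀ T * ramp (w - b))
        + 2^(k-1) * am α₀ T * ramp (w * (1/5) + b)) := by
    rw [show -(w * -1 + b) = w - b by ring]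
    have h2 : (1:ℝ) ≤ 2^(k-1) := one_le_pow₀ (by norm_num)
    have := floorO (p := 2^(k-1) * am α₀ T) (m := 2^(k-1) * am α₀ T) (w := w) (b := b)
      hw1 (by positivity) le_rfl
    nlinarith [ramp_nonneg (w - b)]
  rw [show (-(-10:ℝ)) = 10 by norm_num, show (-(-1:ℝ)) = 1 by norm_num]
  rw [ramp_eq_zero (by norm_num : (1:ℝ) ≤ 10), ramp_one,
    ramp_eq_zero (by norm_num : (1:ℝ) ≤ 2)]
  have hpool := pool_nonneg T hα hT
  linarith [hfloor, hsplit, hsub,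
    mul_nonneg (show (0:ℝ) ≤ 1/2 by norm_num) (ramp_nonneg (-(w * -10 + b))),
    mul_nonneg hpool (ramp_nonneg (w * 2 + b))]

lemma step_even (hα : 0 < α₀) (hT : 1 ≤ T) {k : ℕ} (hk1 : 2 ≤ k) (hk2 : k ≤ T-1)
    (w b : ℝ) (hw : |w| ≤ 1) :
    pseudoLossR1 (1, 0) (1, 0) (PP α₀ T (2*k))
      ≤ pseudoLossR1 (1, 0) (w, b) (PP α₀ T (2*k)) := by
  have hw1 : w ≤ 1 := le_trans (le_abs_self w) hw
  have hA0 : 0 < am α₀ T := am_pos T hα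
  rw [pseudo_formula hα hT, pseudo_formula hα hT]
  have hm1 : ∀ x : ℝ, model1 (1, 0) x = x := fun x => by simp [model1]
  have hm2 : ∀ x : ℝ, model1 (w, b) x = w * x + b := fun x => by simp [model1]
  simp only [hm1, hm2]
  -- positions
  have hck : cpos T (2*k) k = 4/5 := by
    unfold cpos
    rw [if_neg (by omega), if_neg (by omega), if_pos rfl]
  have hcross : cpos T (2*k) (k-1) = -2/5 := by
    unfold cpos
    rw [if_neg (by omega), if_neg (by omega), if_neg (by omega), if_neg (by omega),
      if_pos (by omega)]
  have hparked : ∀ j, 1 ≤ j → j + 2 ≤ k → cpos T (2*k) j = -1 := by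
    intro j hj1 hj2
    unfold cpos
    rw [if_neg (by omega), if_neg (by omega), if_neg (by omega), if_neg (by omega),
      if_neg (by omega)]
  -- LHS chunk sum
  have hL : ∀ j ∈ Icc 1 (T-1),
      2^(j-1) * am α₀ T * ramp (sgn (cpos T (2*k) j) * cpos T (2*k) j)
      = (if j = k then (1/5) * (2^(k-1) * am α₀ T) else 0)
        + (if j = k-1 then (3/5) * (2^(k-2) * am α₀ T) else 0) := by
    intro j hj
    simp only [Finset.mem_Icc] at hj
    by_cases hjk : j = k
    · subst hjk
      rw [if_pos rfl, if_neg (by omega), hck, sgn_nonneg (by norm_num : (0:ℝ) ≤ 4/5)]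
      rw [show ramp (1 * (4/5)) = 1/5 by unfold ramp; norm_num]
      ring
    · rw [if_neg hjk]
      by_cases hjk1 : j = k-1
      · subst hjk1
        rw [if_pos rfl, hcross, sgn_neg' (by norm_num : (-2/5:ℝ) < 0)]
        rw [show ramp (-1 * (-2/5)) = 3/5 by unfold ramp; norm_num]
        rw [show k - 1 - 1 = k - 2 by omega]
        ring
      · rw [if_neg hjk1]
        rcases lt_or_gt_of_ne hjk with hlt | hgt
        · rw [hparked j hj.1 (by omega), our_g_zero (by rw [abs_of_nonpos] <;> norm_num),
            mul_zero, add_zero]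
        · have hc : cpos T (2*k) j = 2 - j * eps T := by
            unfold cpos; rw [if_pos (by omega)]
          have hjε : (j:ℝ) * eps T ≤ 1/10 := mul_eps_le hT (by omega)
          have hjε0 : 0 ≤ (j:ℝ) * eps T := mul_nonneg (by positivity) eps_nonneg
          rw [hc, our_g_zero (by rw [abs_of_nonneg (by linarith)]; linarith), mul_zero, add_zero]
  rw [Finset.sum_congr rfl hL, Finset.sum_add_distrib,
    Finset.sum_ite_eq' (Icc 1 (T-1)) k, Finset.sum_ite_eq' (Icc 1 (T-1)) (k-1),
    if_pos (by simp only [Finset.mem_Icc]; omega), if_pos (by simp only [Finset.mem_Icc]; omega)]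
  -- RHS chunk sum lower bound
  set S := ∑ j ∈ Icc 1 (T-1),
    2^(j-1) * am α₀ T * ramp (sgn (cpos T (2*k) j) * (w * cpos T (2*k) j + b)) with hS
  have hsub : ∑ j ∈ Icc 1 k,
      2^(j-1) * am α₀ T * ramp (sgn (cpos T (2*k) j) * (w * cpos T (2*k) j + b)) ≤ S := by
    apply Finset.sum_le_sum_of_subset_of_nonneg (Finset.Icc_subset_Icc_right (by omega))
    intro j _ _
    exact mul_nonneg (by positivity) (ramp_nonneg _)
  have hsplit : ∑ j ∈ Icc 1 k,
      2^(j-1) * am α₀ T * ramp (sgn (cpos T (2*k) j) * (w * cpos T (2*k) j + b))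
      = (2^(k-2) - 1) * (am α₀ T * ramp (w - b))
        + 2^(k-2) * am α₀ T * ramp (w * (2/5) - b)
        + 2^(k-1) * am α₀ T * ramp (w * (4/5) + b) := by
    rw [show k = (k-2) + 1 + 1 by omega, Finset.sum_Icc_succ_top (by omega),
      Finset.sum_Icc_succ_top (by omega)]
    rw [show (k-2) + 1 + 1 = k by omega, show (k-2) + 1 = k - 1 by omega, hck, hcross]
    rw [sgn_nonneg (by norm_num : (0:ℝ) ≤ 4/5), sgn_neg' (by norm_num : (-2/5:ℝ) < 0), one_mul]
    rw [show -1 * (w * (-2/5) + b) = w * (2/5) - b by ring]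
    have hpk : ∀ j ∈ Icc 1 (k-2),
        2^(j-1) * am α₀ T * ramp (sgn (cpos T (2*k) j) * (w * cpos T (2*k) j + b))
        = 2^(j-1) * (am α₀ T * ramp (w - b)) := by
      intro j hj
      simp only [Finset.mem_Icc] at hj
      rw [hparked j hj.1 (by omega), sgn_neg' (by norm_num : (-1:ℝ) < 0)]
      rw [show -1 * (w * -1 + b) = w - b by ring]
      ring
    rw [Finset.sum_congr rfl hpk, geom_sum_Icc]
    try rw [show k - 1 - 1 = k - 2 by omega]
    try ring
  -- assemble
  have hfloor : (1/5) * (2^(k-1) * am α₀ T) + (3/5) * (2^(k-2) * am α₀ T)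
      ≤ am α₀ T * ramp (-(w * -1 + b))
        + ((2^(k-2) - 1) * (am α₀ T * ramp (w - b))
          + 2^(k-2) * am α₀ T * ramp (w * (2/5) - b)
          + 2^(k-1) * am α₀ T * ramp (w * (4/5) + b)) := by
    rw [show -(w * -1 + b) = w - b by ring]
    have h2 : (1:ℝ) ≤ 2^(k-2) := one_le_pow₀ (by norm_num)
    have hpow : (2:ℝ)^(k-1) = 2 * 2^(k-2) := by
      rw [show k - 1 = (k-2) + 1 by omega, pow_succ]
      ring
    have := floorE (p := 2^(k-1) * am α₀ T) (q := 2^(k-2) * am α₀ T)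
      (m := 2^(k-2) * am α₀ T) (w := w) (b := b) hw1 (by positivity)
      (by nlinarith) (by nlinarith)
    nlinarith [ramp_nonneg (w - b)]
  rw [show (-(-10:ℝ)) = 10 by norm_num, show (-(-1:ℝ)) = 1 by norm_num]
  rw [ramp_eq_zero (by norm_num : (1:ℝ) ≤ 10), ramp_one,
    ramp_eq_zero (by norm_num : (1:ℝ) ≤ 2)]
  have hpool := pool_nonneg T hα hT
  linarith [hfloor, hsplit, hsub,
    mul_nonneg (show (0:ℝ) ≤ 1/2 by norm_num) (ramp_nonneg (-(w * -10 + b))),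
    mul_nonneg hpool (ramp_nonneg (w * 2 + b))]

lemma step_even1 (hα : 0 < α₀) (hT : 2 ≤ T) (w b : ℝ) (hw : |w| ≤ 1) :
    pseudoLossR1 (1, 0) (1, 0) (PP α₀ T 2)
      ≤ pseudoLossR1 (1, 0) (w, b) (PP α₀ T 2) := by
  have hT1 : 1 ≤ T := by omega
  have hw1 : w ≤ 1 := le_trans (le_abs_self w) hw
  have hA0 : 0 < am α₀ T := am_pos T hα
  rw [pseudo_formula hα hT1, pseudo_formula hα hT1]
  have hm1 : ∀ x : ℝ, model1 (1, 0) x = x := fun x => by simp [model1]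
  have hm2 : ∀ x : ℝ, model1 (w, b) x = w * x + b := fun x => by simp [model1]
  simp only [hm1, hm2]
  have hck : cpos T 2 1 = 4/5 := by
    unfold cpos
    rw [if_neg (by omega), if_neg (by omega), if_pos rfl]
  -- LHS chunk sum
  have hL : ∀ j ∈ Icc 1 (T-1),
      2^(j-1) * am α₀ T * ramp (sgn (cpos T 2 j) * cpos T 2 j)
      = if j = 1 then (1/5) * am α₀ T else 0 := by
    intro j hj
    simp only [Finset.mem_Icc] at hj
    by_cases hjk : j = 1
    · subst hjk
      rw [if_pos rfl, hck, sgn_nonneg (by norm_num : (0:ℝ) ≤ 4/5)]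
      rw [show ramp (1 * (4/5)) = 1/5 by unfold ramp; norm_num]
      norm_num
      ring
    · rw [if_neg hjk]
      have hc : cpos T 2 j = 2 - j * eps T := by
        unfold cpos; rw [if_pos (by omega)]
      have hjε : (j:ℝ) * eps T ≤ 1/10 := mul_eps_le hT1 (by omega)
      have hjε0 : 0 ≤ (j:ℝ) * eps T := mul_nonneg (by positivity) eps_nonneg
      rw [hc, our_g_zero (by rw [abs_of_nonneg (by linarith)]; linarith), mul_zero]
  rw [Finset.sum_congr rfl hL, Finset.sum_ite_eq' (Icc 1 (T-1)) 1,
    if_pos (by simp only [Finset.mem_Icc]; omega)]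
  -- RHS chunk sum lower bound
  set S := ∑ j ∈ Icc 1 (T-1),
    2^(j-1) * am α₀ T * ramp (sgn (cpos T 2 j) * (w * cpos T 2 j + b)) with hS
  have hsub : ∑ j ∈ Icc 1 1,
      2^(j-1) * am α₀ T * ramp (sgn (cpos T 2 j) * (w * cpos T 2 j + b)) ≤ S := by
    apply Finset.sum_le_sum_of_subset_of_nonneg (Finset.Icc_subset_Icc_right (by omega))
    intro j _ _
    exact mul_nonneg (by positivity) (ramp_nonneg _)
  have hsplit : ∑ j ∈ Icc 1 1,
      2^(j-1) * am α₀ T * ramp (sgn (cpos T 2 j) * (w * cpos T 2 j + b))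
      = am α₀ T * ramp (w * (4/5) + b) := by
    rw [Finset.Icc_self, Finset.sum_singleton, hck,
      sgn_nonneg (by norm_num : (0:ℝ) ≤ 4/5), one_mul]
    norm_num
  have hfloor : (1/5) * am α₀ T
      ≤ am α₀ T * ramp (-(w * -1 + b)) + am α₀ T * ramp (w * (4/5) + b) := by
    rw [show -(w * -1 + b) = w - b by ring]
    have := floorE (p := am α₀ T) (q := 0) (m := am α₀ T) (w := w) (b := b) hw1 le_rfl
      (by positivity) (by linarith)
    nlinarith [ramp_nonneg (w - b)]
  rw [show (-(-10:ℝ)) = 10 by norm_num, show (-(-1:ℝ)) = 1 by norm_num]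
  rw [ramp_eq_zero (by norm_num : (1:ℝ) ≤ 10), ramp_one,
    ramp_eq_zero (by norm_num : (1:ℝ) ≤ 2)]
  have hpool := pool_nonneg T hα hT1
  linarith [hfloor, hsplit, hsub,
    mul_nonneg (show (0:ℝ) ≤ 1/2 by norm_num) (ramp_nonneg (-(w * -10 + b))),
    mul_nonneg hpool (ramp_nonneg (w * 2 + b))]

lemma final_bound (hT : 1 ≤ T) (α₀ : ℝ) :
    min (1/2) (2^(T-1) * α₀) ≤ 2^(T-1) * am α₀ T := by
  unfold am
  rcases le_total α₀ (1/2^T) with h | h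
  · rw [min_eq_left h]
    exact min_le_right _ _
  · rw [min_eq_right h]
    have h2 : (2:ℝ)^(T-1) * (1 / 2^T) = 1/2 := by
      rw [show T = (T-1) + 1 by omega, pow_succ]
      field_simp
      simp
    rw [h2]
    exact min_le_left _ _

end main

/-- Lower bound: gradual self-training can suffer exponentially growing loss. For every
`0 < α₀ ≤ 1/4` and `T ≥ 1` there are `0.6`-gradually-shifting distributions on `ℝ × {-1,1}`,
with balanced labels, supported on `[-10, 2]`, perfectly separable by some `θ* ∈ Θ₁`, on which
gradual self-training started at loss `≤ α₀` ends with loss `≥ min(1/2, 2^(T-1) α₀)`. -/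
theorem stmt6 (α₀ : ℝ) (hα₀ : 0 < α₀) (hα₀' : α₀ ≤ 1 / 4) (T : ℕ) (hT : 1 ≤ T) :
    ∃ P : ℕ → Measure (ℝ × ℝ),
      (∀ i ≤ 2 * T, IsProbabilityMeasure (P i)) ∧
      (∀ i < 2 * T, IsShift1 (P i) (P (i + 1)) 0.6) ∧
      (∀ i ≤ 2 * T, P i {p | p.2 = 1} = 1 / 2 ∧ P i {p | p.2 = -1} = 1 / 2) ∧
      (∀ i ≤ 2 * T, P i {p | ¬(-10 ≤ p.1 ∧ p.1 ≤ 2)} = 0) ∧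
      (∃ θstar : ℝ × ℝ, |θstar.1| ≤ 1 ∧ ∀ i ≤ 2 * T, lossR1 θstar (P i) = 0) ∧
      (∃ θ : ℕ → ℝ × ℝ,
        (∀ t ≤ 2 * T, |(θ t).1| ≤ 1) ∧
        lossR1 (θ 0) (P 0) ≤ α₀ ∧
        (∀ t, 1 ≤ t → t ≤ 2 * T → ∀ θ'' : ℝ × ℝ, |θ''.1| ≤ 1 →
          pseudoLossR1 (θ (t - 1)) (θ t) (P t) ≤ pseudoLossR1 (θ (t - 1)) θ'' (P t)) ∧
        min (1 / 2) (2 ^ (T - 1) * α₀) ≤ lossR1 (θ (2 * T)) (P (2 * T))) := by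
  refine ⟨PP α₀ T, fun i _ => PP_prob hα₀ hT i, fun i hi => PP_shift hT hi,
    fun i _ => ⟨PP_mass_pos hα₀ hT i, PP_mass_neg i⟩,
    fun i _ => PP_support hT i,
    ⟨(1, 8), by norm_num, fun i _ => loss_star hα₀ hT i⟩, ?_⟩
  refine ⟨fun t => if t = 2*T then (1, -(3/5)) else (1, 0), ?_, ?_, ?_, ?_⟩
  · intro t _
    by_cases h : t = 2*T <;> simp [h]
  · show lossR1 (if 0 = 2*T then ((1:ℝ), -(3/5:ℝ)) else (1, 0)) (PP α₀ T 0) ≤ α₀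
    rw [if_neg (by omega), loss_init hα₀ hT]
    exact am_le
  · intro t ht1 ht2 θ'' hw
    have hθprev : (if t - 1 = 2*T then ((1:ℝ), -(3/5:ℝ)) else (1, 0)) = (1, 0) :=
      if_neg (by omega)
    simp only [hθprev]
    by_cases hfin : t = 2*T
    · rw [if_pos hfin, hfin, pseudo_final hα₀ hT]
      exact pseudo_nonneg _ _ _
    · rw [if_neg hfin]
      obtain ⟨w, b⟩ := θ''
      rcases Nat.even_or_odd t with ⟨k, hk⟩ | ⟨k, hk⟩
      · rw [show t = 2*k by omega]
        by_cases hk1 : k = 1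
        · subst hk1
          exact step_even1 hα₀ (by omega) w b hw
        · exact step_even hα₀ hT (by omega) (by omega) w b hw
      · rw [show t = 2*k+1 by omega]
        by_cases hk0 : k = 0
        · subst hk0
          rw [show 2*0+1 = 1 by norm_num, pseudo_t1 hα₀ hT]
          exact pseudo_nonneg _ _ _
        · exact step_odd hα₀ hT (by omega) (by omega) w b hw
  · show _ ≤ lossR1 (if 2*T = 2*T then ((1:ℝ), -(3/5:ℝ)) else (1, 0)) (PP α₀ T (2*T))
    rw [if_pos rfl, loss_final hα₀ hT]
    exact final_bound hT α₀
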